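/- Let η ∈ (0,1), let σ ≥ 0 and c₁, c₂ ≥ 0 be real numbers, and let K₁, K₂, M, R₁, R₂ be d × d real symmetric matrices such that 0 ⪯ R₁ ⪯ c₁·σ·I, 0 ⪯ R₂ ⪯ c₂·σ·I, K₂ ⪯ M ⪯ K₁, and, with K̃₁ = K₁ + R₁ and K̃₂ = K₂ + R₂, (1 − η)·K̃₁ ⪯ K̃₂. Then M − c₁·σ·I ⪯ K̃₁ ⪯ (1/(1 − η))·M + (c₂/(1 − η))·σ·I. -/

import Mathlib

/-!
Under Mathlib's `MatrixOrder`, `LoewnerLE` is the order of an ordered ℝ-module. The lower bound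
is the chain `M - c₁σ I ⪯ M ⪯ K₁ ⪯ K₁ + R₁`; for the upper bound,
`(1 - η) K̃₁ ⪯ K₂ + R₂ ⪯ M + c₂σ I`, and scaling by `(1 - η)⁻¹ > 0` preserves the order.
-/

/-- The Loewner partial order on real square matrices: `M ⪯ N` iff `N - M` is
positive semidefinite. -/
def LoewnerLE {d : ℕ} (M N : Matrix (Fin d) (Fin d) ℝ) : Prop := (N - M).PosSemidef

open scoped MatrixOrder

theorem loewnerLE_iff_le {d : ℕ} {A B : Matrix (Fin d) (Fin d) ℝ} : LoewnerLE A B ↔ A ≤ B :=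
  Iff.rfl

theorem stmt15_general (d : ℕ) (η σ c₁ c₂ : ℝ)
    (hη1 : η < 1) (hσ : 0 ≤ σ) (hc₁ : 0 ≤ c₁)
    (K₁ K₂ M R₁ R₂ : Matrix (Fin d) (Fin d) ℝ)
    (hR₁psd : R₁.PosSemidef)
    (hR₂ub : LoewnerLE R₂ ((c₂ * σ) • (1 : Matrix (Fin d) (Fin d) ℝ)))
    (hsand₁ : LoewnerLE K₂ M) (hsand₂ : LoewnerLE M K₁)
    (hhist : LoewnerLE ((1 - η) • (K₁ + R₁)) (K₂ + R₂)) :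
    LoewnerLE (M - (c₁ * σ) • (1 : Matrix (Fin d) (Fin d) ℝ)) (K₁ + R₁) ∧
      LoewnerLE (K₁ + R₁)
        ((1 / (1 - η)) • M + (c₂ / (1 - η) * σ) • (1 : Matrix (Fin d) (Fin d) ℝ)) := by
  simp only [loewnerLE_iff_le] at hR₂ub hsand₁ hsand₂ hhist ⊢
  constructor
  · calc M - (c₁ * σ) • 1 ≤ M := sub_le_self M (smul_nonneg (mul_nonneg hc₁ hσ) zero_le_one)
      _ ≤ K₁ := hsand₂
      _ ≤ K₁ + R₁ := le_add_of_nonneg_right hR₁psd.nonneg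
  · have hscaled : (1 - η) • (K₁ + R₁) ≤ M + (c₂ * σ) • 1 := hhist.trans (add_le_add hsand₁ hR₂ub)
    calc K₁ + R₁ ≤ (1 - η)⁻¹ • (M + (c₂ * σ) • 1) :=
          (le_inv_smul_iff_of_pos (sub_pos.mpr hη1)).mpr hscaled
      _ = (1 / (1 - η)) • M + (c₂ / (1 - η) * σ) • 1 := by
          rw [smul_add, smul_smul, one_div, inv_mul_eq_div, mul_div_right_comm]

theorem stmt15 (d : ℕ) (η σ c₁ c₂ : ℝ)
    (hη0 : 0 < η) (hη1 : η < 1) (hσ : 0 ≤ σ) (hc₁ : 0 ≤ c₁) (hc₂ : 0 ≤ c₂)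
    (K₁ K₂ M R₁ R₂ : Matrix (Fin d) (Fin d) ℝ)
    (hK₁ : K₁.IsSymm) (hK₂ : K₂.IsSymm) (hM : M.IsSymm) (hR₁ : R₁.IsSymm) (hR₂ : R₂.IsSymm)
    (hR₁psd : R₁.PosSemidef) (hR₁ub : LoewnerLE R₁ ((c₁ * σ) • (1 : Matrix (Fin d) (Fin d) ℝ)))
    (hR₂psd : R₂.PosSemidef) (hR₂ub : LoewnerLE R₂ ((c₂ * σ) • (1 : Matrix (Fin d) (Fin d) ℝ)))
    (hsand₁ : LoewnerLE K₂ M) (hsand₂ : LoewnerLE M K₁)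
    (hhist : LoewnerLE ((1 - η) • (K₁ + R₁)) (K₂ + R₂)) :
    LoewnerLE (M - (c₁ * σ) • (1 : Matrix (Fin d) (Fin d) ℝ)) (K₁ + R₁) ∧
      LoewnerLE (K₁ + R₁)
        ((1 / (1 - η)) • M + (c₂ / (1 - η) * σ) • (1 : Matrix (Fin d) (Fin d) ℝ)) :=
  stmt15_general d η σ c₁ c₂ hη1 hσ hc₁ K₁ K₂ M R₁ R₂ hR₁psd hR₂ub hsand₁ hsand₂ hhist
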